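/- arXiv:2601.03049 — 2 statements merged into one kernel-verified Lean document; each statement's English description precedes it below -/
import Mathlib

section
/- Let r ≥ 1 and let n, n_1, …, n_r be integers with n_1 ≥ n_2 ≥ … ≥ n_r ≥ 1 and n ≥ n_1 + … + n_r (this encodes 𝔥 = 𝔰𝔭_{n_1}(ℂ) ⊕ … ⊕ 𝔰𝔭_{n_r}(ℂ) block-diagonally embedded in 𝔤 = 𝔰𝔭_n(ℂ)). For tuples a^{(k)} ∈ ℝ^{n_k}, let c ∈ ℝ^n be the concatenation a^{(1)} ⌢ … ⌢ a^{(r)} followed by n − (n_1 + … + n_r) zeros. Then: (I) [for all such families: 2Σ_{k=1}^r ρ_C(a^{(k)}) ≤ ρ_C(c)] if and only if 2n_1 ≤ n and it is not the case that r ≥ 2 and n = 2n_1 = 2n_2; (II) [for all such families with (a^{(1)}, …, a^{(r)}) ≠ 0: 2Σ_{k=1}^r ρ_C(a^{(k)}) < ρ_C(c)] if and only if 2n_1 ≤ n − 1 and it is not the case that n = 3, r = 3 and n_1 = n_2 = n_3 = 1. -/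
open Finset

/-- `ρ_A(c) = Σ_{i<j} |c_i - c_j|`, written in the permutation-invariant
symmetric form `(1/2) Σ_{i,j} |c_i - c_j|`. -/
noncomputable def rhoA {ι : Type*} [Fintype ι] (c : ι → ℝ) : ℝ :=
  (∑ i, ∑ j, |c i - c j|) / 2

/-- `ρ_B(c) = Σ_{i<j} (|c_i - c_j| + |c_i + c_j|) + Σ_i |c_i|`, written in the
permutation-invariant symmetric form `(1/2) Σ_{i,j} (|c_i - c_j| + |c_i + c_j|)`. -/
noncomputable def rhoB {ι : Type*} [Fintype ι] (c : ι → ℝ) : ℝ :=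
  (∑ i, ∑ j, (|c i - c j| + |c i + c j|)) / 2

/-- `ρ_D(c) = Σ_{i<j} (|c_i - c_j| + |c_i + c_j|) = ρ_B(c) - Σ_i |c_i|`. -/
noncomputable def rhoD {ι : Type*} [Fintype ι] (c : ι → ℝ) : ℝ :=
  rhoB c - ∑ i, |c i|

/-- `ρ_C(c) = Σ_{i<j} (|c_i - c_j| + |c_i + c_j|) + 2 Σ_i |c_i| = ρ_B(c) + Σ_i |c_i|`. -/
noncomputable def rhoC {ι : Type*} [Fintype ι] (c : ι → ℝ) : ℝ :=
  rhoB c + ∑ i, |c i|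

/-- `ρ_{SO_n}` is `ρ_D` for even `n` and `ρ_B` for odd `n`. -/
noncomputable def rhoSO (n : ℕ) {ι : Type*} [Fintype ι] (c : ι → ℝ) : ℝ :=
  if Even n then rhoD c else rhoB c

lemma abs_add_eq_of_mul_nonneg {a b : ℝ} (h : 0 ≤ a * b) : |a + b| = |a| + |b| := by
  rcases le_or_gt 0 a with ha | ha
  · rcases le_or_gt 0 b with hb | hb
    · rw [abs_of_nonneg ha, abs_of_nonneg hb, abs_of_nonneg (by linarith)]
    · have hb0 : a = 0 := by nlinarith
      subst hb0; simp
  · rcases le_or_gt 0 b with hb | hb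
    · have hb0 : b = 0 := by nlinarith
      subst hb0; simp
    · rw [abs_of_neg ha, abs_of_neg hb, abs_of_neg (by linarith)]; ring

private lemma two_max_aux {x y : ℝ} (h : |y| ≤ |x|) : |x - y| + |x + y| = 2 * |x| := by
  rcases le_or_gt 0 x with hx | hx
  · rw [abs_of_nonneg hx] at h ⊢
    obtain ⟨h1, h2⟩ := abs_le.mp h
    rw [abs_of_nonneg (by linarith), abs_of_nonneg (by linarith)]; ring
  · rw [abs_of_neg hx] at h ⊢
    obtain ⟨h1, h2⟩ := abs_le.mp h
    rw [abs_of_nonpos (by linarith), abs_of_nonpos (by linarith)]; ring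

lemma abs_sub_add_abs_add (x y : ℝ) : |x - y| + |x + y| = 2 * max |x| |y| := by
  rcases le_total |y| |x| with h | h
  · rw [max_eq_left h, two_max_aux h]
  · rw [max_eq_right h, ← two_max_aux h, abs_sub_comm, add_comm x y, abs_sub_comm y x]

lemma rhoC_abs {ι : Type*} [Fintype ι] (c : ι → ℝ) :
    rhoC (fun i => |c i|) = rhoC c := by
  unfold rhoC rhoB
  congr 1
  · congr 1
    apply Finset.sum_congr rfl; intro i _
    apply Finset.sum_congr rfl; intro j _
    rw [abs_sub_add_abs_add, abs_sub_add_abs_add, abs_abs, abs_abs]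
  · apply Finset.sum_congr rfl; intro i _
    exact abs_abs (c i)

lemma rhoC_add {ι : Type*} [Fintype ι] (v u : ι → ℝ) (hv : ∀ i, 0 ≤ v i)
    (hu : ∀ i, 0 ≤ u i) (hc : ∀ i j, 0 ≤ (v i - v j) * (u i - u j)) :
    rhoC (fun i => v i + u i) = rhoC v + rhoC u := by
  unfold rhoC rhoB
  have e1 : (∑ i, ∑ j, (|(v i + u i) - (v j + u j)| + |(v i + u i) + (v j + u j)|))
      = (∑ i, ∑ j, (|v i - v j| + |v i + v j|)) + (∑ i, ∑ j, (|u i - u j| + |u i + u j|)) := by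
    rw [← Finset.sum_add_distrib]
    apply Finset.sum_congr rfl; intro i _
    rw [← Finset.sum_add_distrib]
    apply Finset.sum_congr rfl; intro j _
    have hd : |(v i + u i) - (v j + u j)| = |v i - v j| + |u i - u j| := by
      have h := abs_add_eq_of_mul_nonneg (hc i j)
      calc |(v i + u i) - (v j + u j)| = |(v i - v j) + (u i - u j)| := by congr 1; ring
        _ = _ := h
    have hs : |(v i + u i) + (v j + u j)| = |v i + v j| + |u i + u j| := by
      rw [abs_of_nonneg (by have := hv i; have := hv j; have := hu i; have := hu j; linarith),
          abs_of_nonneg (by have := hv i; have := hv j; linarith),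
          abs_of_nonneg (by have := hu i; have := hu j; linarith)]
      ring
    rw [hd, hs]; ring
  have e2 : (∑ i, |v i + u i|) = (∑ i, |v i|) + (∑ i, |u i|) := by
    rw [← Finset.sum_add_distrib]
    apply Finset.sum_congr rfl; intro i _
    rw [abs_of_nonneg (hv i), abs_of_nonneg (hu i),
        abs_of_nonneg (by have := hv i; have := hu i; linarith)]
  rw [e1, e2]; ring

lemma rhoC_smul {ι : Type*} [Fintype ι] (c : ℝ) (hc : 0 ≤ c) (w : ι → ℝ) :
    rhoC (fun i => c * w i) = c * rhoC w := by
  unfold rhoC rhoB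
  have e1 : (∑ i, ∑ j, (|c * w i - c * w j| + |c * w i + c * w j|))
      = c * ∑ i, ∑ j, (|w i - w j| + |w i + w j|) := by
    rw [Finset.mul_sum]
    apply Finset.sum_congr rfl; intro i _
    rw [Finset.mul_sum]
    apply Finset.sum_congr rfl; intro j _
    rw [← mul_sub, ← mul_add, abs_mul, abs_mul, abs_of_nonneg hc]; ring
  have e2 : (∑ i, |c * w i|) = c * ∑ i, |w i| := by
    rw [Finset.mul_sum]
    apply Finset.sum_congr rfl; intro i _
    rw [abs_mul, abs_of_nonneg hc]
  rw [e1, e2]; ring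

lemma rhoC_eval01 {ι : Type*} [Fintype ι] (w : ι → ℝ) (h01 : ∀ i, w i = 0 ∨ w i = 1) :
    rhoC w = (∑ i, w i) * (2 * (Fintype.card ι : ℝ) + 1 - ∑ i, w i) := by
  have hnn : ∀ i, 0 ≤ w i := fun i => by rcases h01 i with h | h <;> rw [h] <;> norm_num
  have e1 : (∑ i, ∑ j, (|w i - w j| + |w i + w j|))
      = ∑ i, ∑ j, (2 * w i + 2 * w j - 2 * (w i * w j)) := by
    apply Finset.sum_congr rfl; intro i _
    apply Finset.sum_congr rfl; intro j _
    have hd : |w i - w j| = w i + w j - 2 * (w i * w j) := by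
      rcases h01 i with h | h <;> rcases h01 j with h' | h' <;> rw [h, h'] <;> norm_num
    have hs : |w i + w j| = w i + w j := abs_of_nonneg (by have := hnn i; have := hnn j; linarith)
    rw [hd, hs]; ring
  have e2 : (∑ i, |w i|) = ∑ i, w i := by
    apply Finset.sum_congr rfl; intro i _; exact abs_of_nonneg (hnn i)
  unfold rhoC rhoB
  rw [e1, e2]
  have e4 : (∑ i, ∑ j, (w i * w j)) = (∑ i, w i) * (∑ i, w i) :=
    (Finset.sum_mul_sum univ univ w w).symm
  have e3 : (∑ i, ∑ j, (2 * w i + 2 * w j - 2 * (w i * w j)))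
      = 2 * (Fintype.card ι : ℝ) * (∑ i, w i) + 2 * (Fintype.card ι : ℝ) * (∑ i, w i)
        - 2 * ((∑ i, w i) * (∑ i, w i)) := by
    simp only [Finset.sum_sub_distrib, Finset.sum_add_distrib, Finset.sum_const, card_univ,
      nsmul_eq_mul, ← Finset.mul_sum, ← Finset.sum_mul]
    ring
  rw [e3]; ring

lemma AR1 {r : ℕ} (nk mk : Fin r → ℤ) (N : ℤ)
    (hn1 : ∀ k, 1 ≤ nk k) (hm0 : ∀ k, 0 ≤ mk k) (hmn : ∀ k, mk k ≤ nk k)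
    (hs : ∑ k, nk k ≤ N) (h2 : ∀ k, 2 * nk k ≤ N)
    (hexcl : ∀ k l, k ≠ l → ¬(2 * nk k = N ∧ 2 * nk l = N)) :
    2 * ∑ k, mk k * (2 * nk k + 1 - mk k) ≤ (∑ k, mk k) * (2 * N + 1 - ∑ k, mk k) := by
  set M : ℤ := ∑ k, mk k with hM
  set q : Fin r → ℤ := fun k => 2 * nk k - mk k with hqdef
  set t : Fin r → ℤ := fun k => 2 * N - M - 1 - 2 * q k with htdef
  have hq1 : ∀ k, 1 ≤ q k := fun k => by
    have := hn1 k; have := hmn k; simp only [hqdef]; omega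
  have expand : ∑ k, mk k * t k
      = M * (2 * N + 1 - M) - 2 * ∑ k, mk k * (2 * nk k + 1 - mk k) := by
    have h1 : ∀ k ∈ univ, mk k * t k
        = (2 * N + 1 - M) * mk k - 2 * (mk k * (2 * nk k + 1 - mk k)) := by
      intro k _; simp only [htdef, hqdef]; ring
    rw [Finset.sum_congr rfl h1, Finset.sum_sub_distrib, ← Finset.mul_sum, ← Finset.mul_sum,
      ← hM]
    ring
  suffices hP : 0 ≤ ∑ k, mk k * t k by linarith
  by_cases hM0 : M ≤ 0
  · have hM00 : M = 0 := le_antisymm hM0 (Finset.sum_nonneg fun k _ => hm0 k)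
    have hz := (Finset.sum_eq_zero_iff_of_nonneg (fun k _ => hm0 k)).mp (hM.symm.trans hM00)
    apply le_of_eq
    exact (Finset.sum_eq_zero fun k hk => by rw [hz k hk, zero_mul]).symm
  push_neg at hM0
  have hMpos : 1 ≤ M := hM0
  have hne : (univ : Finset (Fin r)).Nonempty := by
    by_contra hcon
    rw [Finset.not_nonempty_iff_eq_empty] at hcon
    rw [hM, hcon, Finset.sum_empty] at hMpos; omega
  have hrpos : 1 ≤ r := by
    obtain ⟨k0, -⟩ := hne; exact k0.pos
  obtain ⟨h, -, hmax⟩ := Finset.exists_max_image univ q hne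
  by_cases hx0 : 0 ≤ t h
  · apply Finset.sum_nonneg
    intro k _
    apply mul_nonneg (hm0 k)
    have := hmax k (Finset.mem_univ k)
    simp only [htdef] at hx0 ⊢; omega
  push_neg at hx0
  set x : ℤ := 2 * q h - 2 * N + M + 1 with hxdef
  have hx1 : 1 ≤ x := by
    simp only [htdef] at hx0; simp only [hxdef]; omega
  have f1 : 2 * mk h ≤ M - x + 1 := by
    have := h2 h; simp only [hxdef, hqdef]; omega
  have hMm : 2 * mk h ≤ M := by omega
  obtain ⟨s, hsdef⟩ : ∃ s, s = ∑ k, nk k := ⟨_, rfl⟩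
  obtain ⟨Q, hQdef⟩ : ∃ Q, Q = ∑ k, q k := ⟨_, rfl⟩
  have hQs : Q = 2 * s - M := by
    have h1 : ∀ k ∈ univ, q k = 2 * nk k - mk k := fun k _ => by simp only [hqdef]
    rw [hQdef, Finset.sum_congr rfl h1, Finset.sum_sub_distrib, ← Finset.mul_sum, ← hM, hsdef]
  obtain ⟨e, hedef⟩ : ∃ e, e = N - s := ⟨_, rfl⟩
  have he0 : 0 ≤ e := by omega
  obtain ⟨M', hM'def⟩ : ∃ M', M' = ∑ k ∈ univ.erase h, mk k := ⟨_, rfl⟩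
  have hM'split : M' + mk h = M := by
    rw [hM'def, hM]; exact Finset.sum_erase_add univ mk (Finset.mem_univ h)
  have hM'nonneg : 0 ≤ M' := hM'def ▸ Finset.sum_nonneg fun k _ => hm0 k
  have hid : ∑ k, mk k * t k
      = (M - 2 * mk h) * x + 2 * (∑ k ∈ univ.erase h, mk k * (Q - q h - q k))
        + 2 * M' * (2 * e - 1) := by
    have step1 : ∑ k, mk k * t k = - (M * x) + 2 * ∑ k, mk k * (q h - q k) := by
      have h1 : ∀ k ∈ univ, mk k * t k = mk k * (-x) + 2 * (mk k * (q h - q k)) := by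
        intro k _; simp only [htdef, hxdef]; ring
      rw [Finset.sum_congr rfl h1, Finset.sum_add_distrib, ← Finset.sum_mul, ← Finset.mul_sum,
        ← hM]
      ring
    have step2 : ∑ k, mk k * (q h - q k) = ∑ k ∈ univ.erase h, mk k * (q h - q k) := by
      rw [← Finset.sum_erase_add univ _ (Finset.mem_univ h)]
      simp
    have step3 : ∑ k ∈ univ.erase h, mk k * (q h - q k)
        = M' * x + (∑ k ∈ univ.erase h, mk k * (Q - q h - q k)) + M' * (2 * e - 1) := by
      have h1 : ∀ k ∈ univ.erase h, mk k * (q h - q k)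
          = mk k * x + mk k * (Q - q h - q k) + mk k * (2 * e - 1) := by
        intro k _
        have hqq : q h - q k = x + (Q - q h - q k) + (2 * e - 1) := by
          simp only [hxdef]; omega
        rw [hqq]; ring
      rw [Finset.sum_congr rfl h1, Finset.sum_add_distrib, Finset.sum_add_distrib,
        ← Finset.sum_mul, ← Finset.sum_mul, ← hM'def]
    rw [step1, step2, step3]
    linear_combination 2 * x * hM'split
  have hbr : ∀ k ∈ univ.erase h, Q - q h - q k = ∑ l ∈ (univ.erase h).erase k, q l := by
    intro k hk
    have e1 : ∑ l ∈ (univ.erase h).erase k, q l + q k = ∑ l ∈ univ.erase h, q l :=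
      Finset.sum_erase_add _ _ hk
    have e2 : ∑ l ∈ univ.erase h, q l + q h = Q := by
      rw [hQdef]; exact Finset.sum_erase_add univ q (Finset.mem_univ h)
    omega
  have hbr0 : ∀ k ∈ univ.erase h, 0 ≤ Q - q h - q k := by
    intro k hk
    rw [hbr k hk]
    exact Finset.sum_nonneg fun l _ => le_trans (by norm_num) (hq1 l)
  have hmid0 : 0 ≤ ∑ k ∈ univ.erase h, mk k * (Q - q h - q k) :=
    Finset.sum_nonneg fun k hk => mul_nonneg (hm0 k) (hbr0 k hk)
  rw [hid]
  have hterm1 : 0 ≤ (M - 2 * mk h) * x := mul_nonneg (by omega) (by omega)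
  by_cases he1 : 1 ≤ e
  · have hterm3 : 0 ≤ M' * (2 * e - 1) := mul_nonneg hM'nonneg (by omega)
    linarith
  · have he00 : e = 0 := by omega
    have hcard : (univ.erase h).card = r - 1 := by
      rw [Finset.card_erase_of_mem (Finset.mem_univ h), Finset.card_univ, Fintype.card_fin]
    rcases lt_or_ge r 3 with hr3 | hr3
    · by_cases hr1 : r = 1
      · have hempty : univ.erase h = ∅ := Finset.card_eq_zero.mp (by omega)
        have : M' = 0 := by rw [hM'def, hempty, Finset.sum_empty]
        omega
      · have hcard1 : (univ.erase h).card = 1 := by omega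
        obtain ⟨o, ho⟩ := Finset.card_eq_one.mp hcard1
        have hoh : o ≠ h := by
          have : o ∈ univ.erase h := by rw [ho]; exact Finset.mem_singleton_self o
          exact Finset.ne_of_mem_erase this
        have hsum : nk o + nk h = s := by
          have h3 := Finset.sum_erase_add univ nk (Finset.mem_univ h)
          rw [ho, Finset.sum_singleton] at h3
          omega
        have h4 := h2 h; have h5 := h2 o
        exact absurd ⟨by omega, by omega⟩ (hexcl h o (Ne.symm hoh))
    · have hbr1 : ∀ k ∈ univ.erase h, 1 ≤ Q - q h - q k := by
        intro k hk
        rw [hbr k hk]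
        have hcard2 : ((univ.erase h).erase k).card = r - 2 := by
          rw [Finset.card_erase_of_mem hk, hcard]; omega
        have hne2 : ((univ.erase h).erase k).Nonempty := by
          rw [← Finset.card_pos, hcard2]; omega
        obtain ⟨l, hl⟩ := hne2
        calc (1 : ℤ) ≤ q l := hq1 l
          _ ≤ ∑ l ∈ (univ.erase h).erase k, q l :=
            Finset.single_le_sum (fun i _ => le_trans (by norm_num) (hq1 i)) hl
      have hmid1 : M' ≤ ∑ k ∈ univ.erase h, mk k * (Q - q h - q k) := by
        rw [hM'def]
        apply Finset.sum_le_sum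
        intro k hk
        calc mk k = mk k * 1 := (mul_one _).symm
          _ ≤ mk k * (Q - q h - q k) := mul_le_mul_of_nonneg_left (hbr1 k hk) (hm0 k)
      rw [he00]
      linarith

lemma AR2 {r : ℕ} (nk mk : Fin r → ℤ) (N : ℤ)
    (hn1 : ∀ k, 1 ≤ nk k) (hm0 : ∀ k, 0 ≤ mk k) (hmn : ∀ k, mk k ≤ nk k)
    (hs : ∑ k, nk k ≤ N) (h2 : ∀ k, 2 * nk k + 1 ≤ N)
    (hMpos : 1 ≤ ∑ k, mk k)
    (hexcp : ¬(N = 3 ∧ r = 3 ∧ ∀ k, nk k = 1)) :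
    2 * ∑ k, mk k * (2 * nk k + 1 - mk k) + 1 ≤ (∑ k, mk k) * (2 * N + 1 - ∑ k, mk k) := by
  set M : ℤ := ∑ k, mk k with hM
  set q : Fin r → ℤ := fun k => 2 * nk k - mk k with hqdef
  set t : Fin r → ℤ := fun k => 2 * N - M - 1 - 2 * q k with htdef
  have hq1 : ∀ k, 1 ≤ q k := fun k => by
    have := hn1 k; have := hmn k; simp only [hqdef]; omega
  have expand : ∑ k, mk k * t k
      = M * (2 * N + 1 - M) - 2 * ∑ k, mk k * (2 * nk k + 1 - mk k) := by
    have h1 : ∀ k ∈ univ, mk k * t k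
        = (2 * N + 1 - M) * mk k - 2 * (mk k * (2 * nk k + 1 - mk k)) := by
      intro k _; simp only [htdef, hqdef]; ring
    rw [Finset.sum_congr rfl h1, Finset.sum_sub_distrib, ← Finset.mul_sum, ← Finset.mul_sum,
      ← hM]
    ring
  suffices hP : 1 ≤ ∑ k, mk k * t k by linarith
  have hne : (univ : Finset (Fin r)).Nonempty := by
    by_contra hcon
    rw [Finset.not_nonempty_iff_eq_empty] at hcon
    rw [hM, hcon, Finset.sum_empty] at hMpos; omega
  have hrpos : 1 ≤ r := by
    obtain ⟨k0, -⟩ := hne; exact k0.pos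
  obtain ⟨h, -, hmax⟩ := Finset.exists_max_image univ q hne
  obtain ⟨s, hsdef⟩ : ∃ s, s = ∑ k, nk k := ⟨_, rfl⟩
  obtain ⟨Q, hQdef⟩ : ∃ Q, Q = ∑ k, q k := ⟨_, rfl⟩
  have hQs : Q = 2 * s - M := by
    have h1 : ∀ k ∈ univ, q k = 2 * nk k - mk k := fun k _ => by simp only [hqdef]
    rw [hQdef, Finset.sum_congr rfl h1, Finset.sum_sub_distrib, ← Finset.mul_sum, ← hM, hsdef]
  obtain ⟨e, hedef⟩ : ∃ e, e = N - s := ⟨_, rfl⟩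
  have he0 : 0 ≤ e := by omega
  by_cases hx0 : 0 ≤ t h
  · -- case: no bad block
    have hActne : (univ.filter fun k => 1 ≤ mk k).Nonempty := by
      by_contra hcon
      rw [Finset.not_nonempty_iff_eq_empty, Finset.filter_eq_empty_iff] at hcon
      have hz : ∀ k ∈ (univ : Finset (Fin r)), mk k = 0 := fun k hk => by
        have := hcon hk; have := hm0 k; omega
      have : M = 0 := by rw [hM]; exact Finset.sum_eq_zero hz
      omega
    obtain ⟨j, hjA, hjmin⟩ := Finset.exists_min_image _ q hActne
    have hmj : 1 ≤ mk j := (Finset.mem_filter.mp hjA).2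
    have htk0 : ∀ k, 0 ≤ t k := fun k => by
      have := hmax k (Finset.mem_univ k)
      simp only [htdef] at hx0 ⊢; omega
    by_cases htj : 1 ≤ t j
    · have hterm : 1 ≤ mk j * t j := by
        calc (1 : ℤ) = 1 * 1 := by norm_num
          _ ≤ mk j * t j := mul_le_mul hmj htj (by norm_num) (by omega)
      have hsum := Finset.single_le_sum (f := fun k => mk k * t k)
        (fun k _ => mul_nonneg (hm0 k) (htk0 k)) (Finset.mem_univ j)
      linarith
    · exfalso
      have htj0 : t j = 0 := by have := htk0 j; omega
      have htj0' : 2 * N - M - 1 - 2 * q j = 0 := by simp only [htdef] at htj0; omega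
      have hact_q : ∀ k ∈ univ.filter (fun k => 1 ≤ mk k), q k = q j := by
        intro k hk
        have h1 : q j ≤ q k := hjmin k hk
        have h3 := htk0 k
        simp only [htdef] at h3; omega
      obtain ⟨Sact, hSact⟩ : ∃ S, S = ∑ k ∈ univ.filter (fun k => 1 ≤ mk k), nk k := ⟨_, rfl⟩
      obtain ⟨Sin, hSin⟩ : ∃ S, S = ∑ k ∈ univ.filter (fun k => ¬ 1 ≤ mk k), nk k := ⟨_, rfl⟩
      have hSin0 : 0 ≤ Sin := hSin ▸ Finset.sum_nonneg fun k _ => le_trans (by norm_num) (hn1 k)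
      have hsplit_s : s = Sact + Sin := by
        rw [hsdef, hSact, hSin, Finset.sum_filter_add_sum_filter_not]
      obtain ⟨a, hadef⟩ : ∃ a : ℤ, a = ((univ.filter (fun k => 1 ≤ mk k)).card : ℤ) := ⟨_, rfl⟩
      have ha1 : 1 ≤ a := by
        rw [hadef]
        exact_mod_cast Finset.card_pos.mpr hActne
      have hQact : Q = a * q j + 2 * Sin := by
        rw [hQdef, ← Finset.sum_filter_add_sum_filter_not univ (fun k => 1 ≤ mk k) q]
        congr 1
        · rw [Finset.sum_congr rfl hact_q, Finset.sum_const, nsmul_eq_mul, hadef]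
        · rw [hSin, Finset.mul_sum]
          apply Finset.sum_congr rfl; intro k hk
          have hk0 : mk k = 0 := by
            have := (Finset.mem_filter.mp hk).2; have := hm0 k; omega
          simp only [hqdef, hk0]; ring
      have hqj_eq : a * q j = 2 * Sact - M := by
        have hSS : Sact = s - Sin := by omega
        linarith [hQact, hQs]
      have hmaster : (2 - a) * q j = 2 * (e + Sin) - 1 := by
        linarith [htj0', hqj_eq]
      rcases lt_or_ge a 3 with ha3 | ha3
      · by_cases ha1' : a = 1
        · have hcard1 : (univ.filter (fun k => 1 ≤ mk k)).card = 1 := by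
            rw [hadef] at ha1'; exact_mod_cast ha1'
          obtain ⟨o, ho⟩ := Finset.card_eq_one.mp hcard1
          have hjo : j = o := by
            have hmem := hjA; rw [ho, Finset.mem_singleton] at hmem; exact hmem
          have hSact_j : Sact = nk j := by
            rw [hSact, ho, Finset.sum_singleton, hjo]
          have hqj : q j = 2 * nk j - mk j := by simp only [hqdef]
          have h2j := h2 j
          rw [ha1'] at hmaster
          norm_num at hmaster
          omega
        · have ha2 : a = 2 := by omega
          rw [ha2] at hmaster
          norm_num at hmaster
          omega
      · -- a ≥ 3
        have hqj1 : 1 ≤ q j := hq1 j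
        have hneg : (2 - a) * q j ≤ -1 * q j :=
          mul_le_mul_of_nonneg_right (by omega) (by omega)
        have hesin : e + Sin ≤ 0 := by linarith [hmaster, hneg, hqj1]
        have he00 : e = 0 := by omega
        have hSin00 : Sin = 0 := by omega
        have hActC : univ.filter (fun k => ¬ 1 ≤ mk k) = ∅ := by
          by_contra hcon
          obtain ⟨k, hk⟩ := Finset.nonempty_iff_ne_empty.mpr hcon
          have : (1 : ℤ) ≤ Sin := by
            rw [hSin]
            exact le_trans (hn1 k) (Finset.single_le_sum (f := nk)
              (fun i _ => le_trans (by norm_num) (hn1 i)) hk)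
          omega
        have hall : ∀ k, 1 ≤ mk k := fun k => by
          by_contra hc
          have hmem : k ∈ univ.filter (fun k => ¬ 1 ≤ mk k) :=
            Finset.mem_filter.mpr ⟨Finset.mem_univ k, hc⟩
          rw [hActC] at hmem
          exact absurd hmem (Finset.notMem_empty k)
        have hActuniv : univ.filter (fun k => 1 ≤ mk k) = univ :=
          Finset.filter_true_of_mem (fun k _ => hall k)
        have har : a = (r : ℤ) := by
          rw [hadef, hActuniv, Finset.card_univ, Fintype.card_fin]
        rw [he00, hSin00] at hmaster
        norm_num at hmaster
        have hprod : ((r : ℤ) - 2) * q j = 1 := by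
          rw [har] at hmaster; linarith [hmaster]
        rcases Int.mul_eq_one_iff_eq_one_or_neg_one.mp hprod with ⟨hr2, hq1j⟩ | ⟨hr2, hq1j⟩
        · have hr3' : r = 3 := by omega
          have hnk1 : ∀ k, nk k = 1 := fun k => by
            have hqk : q k = q j := hact_q k (by rw [hActuniv]; exact Finset.mem_univ k)
            have h5 := hmn k; have h6 := hn1 k; have h7 := hm0 k
            have h8 := hq1j
            simp only [hqdef] at hqk h8
            omega
          have hsum1 : s = (r : ℤ) := by
            rw [hsdef, Finset.sum_congr rfl (fun k _ => hnk1 k), Finset.sum_const,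
              Finset.card_univ, Fintype.card_fin, nsmul_eq_mul, mul_one]
          have hN3 : N = 3 := by omega
          exact hexcp ⟨hN3, hr3', hnk1⟩
        · linarith [hq1 j]
  · push_neg at hx0
    set x : ℤ := 2 * q h - 2 * N + M + 1 with hxdef
    have hx1 : 1 ≤ x := by
      simp only [htdef] at hx0; simp only [hxdef]; omega
    have f1 : 2 * mk h ≤ M - x - 1 := by
      have := h2 h; simp only [hxdef, hqdef]; omega
    obtain ⟨M', hM'def⟩ : ∃ M', M' = ∑ k ∈ univ.erase h, mk k := ⟨_, rfl⟩
    have hM'split : M' + mk h = M := by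
      rw [hM'def, hM]; exact Finset.sum_erase_add univ mk (Finset.mem_univ h)
    have hM'nonneg : 0 ≤ M' := hM'def ▸ Finset.sum_nonneg fun k _ => hm0 k
    have hid : ∑ k, mk k * t k
        = (M - 2 * mk h) * x + 2 * (∑ k ∈ univ.erase h, mk k * (Q - q h - q k))
          + 2 * M' * (2 * e - 1) := by
      have step1 : ∑ k, mk k * t k = - (M * x) + 2 * ∑ k, mk k * (q h - q k) := by
        have h1 : ∀ k ∈ univ, mk k * t k = mk k * (-x) + 2 * (mk k * (q h - q k)) := by
          intro k _; simp only [htdef, hxdef]; ring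
        rw [Finset.sum_congr rfl h1, Finset.sum_add_distrib, ← Finset.sum_mul, ← Finset.mul_sum,
          ← hM]
        ring
      have step2 : ∑ k, mk k * (q h - q k) = ∑ k ∈ univ.erase h, mk k * (q h - q k) := by
        rw [← Finset.sum_erase_add univ _ (Finset.mem_univ h)]
        simp
      have step3 : ∑ k ∈ univ.erase h, mk k * (q h - q k)
          = M' * x + (∑ k ∈ univ.erase h, mk k * (Q - q h - q k)) + M' * (2 * e - 1) := by
        have h1 : ∀ k ∈ univ.erase h, mk k * (q h - q k)
            = mk k * x + mk k * (Q - q h - q k) + mk k * (2 * e - 1) := by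
          intro k _
          have hqq : q h - q k = x + (Q - q h - q k) + (2 * e - 1) := by
            simp only [hxdef]; omega
          rw [hqq]; ring
        rw [Finset.sum_congr rfl h1, Finset.sum_add_distrib, Finset.sum_add_distrib,
          ← Finset.sum_mul, ← Finset.sum_mul, ← hM'def]
      rw [step1, step2, step3]
      linear_combination 2 * x * hM'split
    have hbr : ∀ k ∈ univ.erase h, Q - q h - q k = ∑ l ∈ (univ.erase h).erase k, q l := by
      intro k hk
      have e1 : ∑ l ∈ (univ.erase h).erase k, q l + q k = ∑ l ∈ univ.erase h, q l :=
        Finset.sum_erase_add _ _ hk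
      have e2 : ∑ l ∈ univ.erase h, q l + q h = Q := by
        rw [hQdef]; exact Finset.sum_erase_add univ q (Finset.mem_univ h)
      omega
    have hbr0 : ∀ k ∈ univ.erase h, 0 ≤ Q - q h - q k := by
      intro k hk
      rw [hbr k hk]
      exact Finset.sum_nonneg fun l _ => le_trans (by norm_num) (hq1 l)
    have hmid0 : 0 ≤ ∑ k ∈ univ.erase h, mk k * (Q - q h - q k) :=
      Finset.sum_nonneg fun k hk => mul_nonneg (hm0 k) (hbr0 k hk)
    rw [hid]
    have hterm1 : 2 ≤ (M - 2 * mk h) * x := by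
      calc (2 : ℤ) = 2 * 1 := by norm_num
        _ ≤ (M - 2 * mk h) * x := mul_le_mul (by omega) hx1 (by norm_num) (by omega)
    by_cases he1 : 1 ≤ e
    · have hterm3 : 0 ≤ M' * (2 * e - 1) := mul_nonneg hM'nonneg (by omega)
      linarith
    · have he00 : e = 0 := by omega
      have hcard : (univ.erase h).card = r - 1 := by
        rw [Finset.card_erase_of_mem (Finset.mem_univ h), Finset.card_univ, Fintype.card_fin]
      rcases lt_or_ge r 3 with hr3 | hr3
      · by_cases hr1 : r = 1
        · have hempty : univ.erase h = ∅ := Finset.card_eq_zero.mp (by omega)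
          have hM'0 : M' = 0 := by rw [hM'def, hempty, Finset.sum_empty]
          have := hm0 h
          omega
        · have hcard1 : (univ.erase h).card = 1 := by omega
          obtain ⟨o, ho⟩ := Finset.card_eq_one.mp hcard1
          have hsum : nk o + nk h = s := by
            have h3 := Finset.sum_erase_add univ nk (Finset.mem_univ h)
            rw [ho, Finset.sum_singleton] at h3
            omega
          have h4 := h2 h; have h5 := h2 o
          omega
      · have hbr1 : ∀ k ∈ univ.erase h, 1 ≤ Q - q h - q k := by
          intro k hk
          rw [hbr k hk]
          have hcard2 : ((univ.erase h).erase k).card = r - 2 := by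
            rw [Finset.card_erase_of_mem hk, hcard]; omega
          have hne2 : ((univ.erase h).erase k).Nonempty := by
            rw [← Finset.card_pos, hcard2]; omega
          obtain ⟨l, hl⟩ := hne2
          calc (1 : ℤ) ≤ q l := hq1 l
            _ ≤ ∑ l ∈ (univ.erase h).erase k, q l :=
              Finset.single_le_sum (fun i _ => le_trans (by norm_num) (hq1 i)) hl
        have hmid1 : M' ≤ ∑ k ∈ univ.erase h, mk k * (Q - q h - q k) := by
          rw [hM'def]
          apply Finset.sum_le_sum
          intro k hk
          calc mk k = mk k * 1 := (mul_one _).symm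
            _ ≤ mk k * (Q - q h - q k) := mul_le_mul_of_nonneg_left (hbr1 k hk) (hm0 k)
        rw [he00]
        linarith

section Machinery

variable {r n : ℕ} {nn : Fin r → ℕ}

noncomputable def Lval (nn : Fin r → ℕ) (u : (Σ k : Fin r, Fin (nn k)) → ℝ) : ℝ :=
  2 * ∑ k, rhoC (fun i => u ⟨k, i⟩)

noncomputable def Rval (nn : Fin r → ℕ) (n : ℕ) (u : (Σ k : Fin r, Fin (nn k)) → ℝ) : ℝ :=
  rhoC (Sum.elim u (fun _ : Fin (n - ∑ k, nn k) => (0 : ℝ)))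

lemma card_idx (hn : (∑ k, nn k) ≤ n) :
    Fintype.card ((Σ k : Fin r, Fin (nn k)) ⊕ Fin (n - ∑ k, nn k)) = n := by
  rw [Fintype.card_sum, Fintype.card_sigma]
  simp only [Fintype.card_fin]
  omega

lemma eval_L (w : (Σ k : Fin r, Fin (nn k)) → ℝ) (h01 : ∀ x, w x = 0 ∨ w x = 1) :
    Lval nn w = 2 * ∑ k, (∑ i, w ⟨k, i⟩) * (2 * (nn k : ℝ) + 1 - ∑ i, w ⟨k, i⟩) := by
  unfold Lval
  congr 1
  apply Finset.sum_congr rfl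
  intro k _
  rw [rhoC_eval01 (fun i => w ⟨k, i⟩) (fun i => h01 ⟨k, i⟩)]
  rw [Fintype.card_fin]

lemma eval_R (hn : (∑ k, nn k) ≤ n) (w : (Σ k : Fin r, Fin (nn k)) → ℝ)
    (h01 : ∀ x, w x = 0 ∨ w x = 1) :
    Rval nn n w = (∑ k, ∑ i, w ⟨k, i⟩) * (2 * (n : ℝ) + 1 - ∑ k, ∑ i, w ⟨k, i⟩) := by
  unfold Rval
  have h01e : ∀ z, Sum.elim w (fun _ : Fin (n - ∑ k, nn k) => (0 : ℝ)) z = 0 ∨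
      Sum.elim w (fun _ : Fin (n - ∑ k, nn k) => (0 : ℝ)) z = 1 := by
    intro z; rcases z with a | b
    · exact h01 a
    · left; rfl
  rw [rhoC_eval01 _ h01e, card_idx hn]
  have hsum : (∑ z, Sum.elim w (fun _ : Fin (n - ∑ k, nn k) => (0 : ℝ)) z)
      = ∑ k, ∑ i, w ⟨k, i⟩ := by
    rw [Fintype.sum_sum_type]
    simp only [Sum.elim_inl, Sum.elim_inr, Finset.sum_const, smul_zero, add_zero]
    rw [← Finset.univ_sigma_univ, Finset.sum_sigma]
  rw [hsum]

lemma key01 (hpos : ∀ k, 1 ≤ nn k) (hn : (∑ k, nn k) ≤ n)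
    (h2 : ∀ k, 2 * nn k ≤ n)
    (hexcl : ∀ k l : Fin r, k ≠ l → ¬(2 * nn k = n ∧ 2 * nn l = n))
    (w : (Σ k : Fin r, Fin (nn k)) → ℝ) (h01 : ∀ x, w x = 0 ∨ w x = 1) :
    Lval nn w ≤ Rval nn n w := by
  classical
  set m : Fin r → ℕ := fun k => (univ.filter fun i : Fin (nn k) => w ⟨k, i⟩ = 1).card with hmdef
  have hSk : ∀ k, (∑ i, w ⟨k, i⟩) = (m k : ℝ) := by
    intro k
    have h1 : ∀ i ∈ (univ : Finset (Fin (nn k))), w ⟨k, i⟩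
        = if w ⟨k, i⟩ = 1 then (1 : ℝ) else 0 := by
      intro i _
      rcases h01 ⟨k, i⟩ with h | h <;> simp [h]
    rw [Finset.sum_congr rfl h1, Finset.sum_boole, hmdef]
  have hmle : ∀ k, m k ≤ nn k := fun k => by
    rw [hmdef]
    calc (univ.filter fun i : Fin (nn k) => w ⟨k, i⟩ = 1).card
        ≤ (univ : Finset (Fin (nn k))).card := Finset.card_filter_le _ _
      _ = nn k := by rw [Finset.card_univ, Fintype.card_fin]
  have hZ := AR1 (fun k => (nn k : ℤ)) (fun k => (m k : ℤ)) (n : ℤ)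
    (fun k => show (1 : ℤ) ≤ (nn k : ℤ) by exact_mod_cast hpos k)
    (fun k => show (0 : ℤ) ≤ (m k : ℤ) by positivity)
    (fun k => show (m k : ℤ) ≤ (nn k : ℤ) by exact_mod_cast hmle k)
    (show (∑ k, (nn k : ℤ)) ≤ (n : ℤ) by exact_mod_cast hn)
    (fun k => show 2 * (nn k : ℤ) ≤ (n : ℤ) by exact_mod_cast h2 k)
    (fun k l hkl => by
      intro ⟨ha, hb⟩
      refine hexcl k l hkl ⟨?_, ?_⟩
      · exact_mod_cast (show 2 * (nn k : ℤ) = (n : ℤ) from ha)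
      · exact_mod_cast (show 2 * (nn l : ℤ) = (n : ℤ) from hb))
  rw [eval_L w h01, eval_R hn w h01]
  have hrw : (∑ k, (∑ i, w ⟨k, i⟩) * (2 * (nn k : ℝ) + 1 - ∑ i, w ⟨k, i⟩))
      = ∑ k, (m k : ℝ) * (2 * (nn k : ℝ) + 1 - (m k : ℝ)) :=
    Finset.sum_congr rfl (fun k _ => by rw [hSk k])
  have hrw2 : (∑ k, ∑ i, w ⟨k, i⟩) = ∑ k, (m k : ℝ) :=
    Finset.sum_congr rfl (fun k _ => hSk k)
  rw [hrw, hrw2]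
  have hZ' : 2 * ∑ k, (m k : ℤ) * (2 * (nn k : ℤ) + 1 - (m k : ℤ))
      ≤ (∑ k, (m k : ℤ)) * (2 * (n : ℤ) + 1 - ∑ k, (m k : ℤ)) := hZ
  exact_mod_cast hZ'

lemma key01s (hpos : ∀ k, 1 ≤ nn k) (hn : (∑ k, nn k) ≤ n)
    (h2 : ∀ k, 2 * nn k + 1 ≤ n)
    (hexcp : ¬(n = 3 ∧ r = 3 ∧ ∀ k, nn k = 1))
    (w : (Σ k : Fin r, Fin (nn k)) → ℝ) (h01 : ∀ x, w x = 0 ∨ w x = 1)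
    (hex : ∃ x, w x = 1) :
    Lval nn w + 1 ≤ Rval nn n w := by
  classical
  set m : Fin r → ℕ := fun k => (univ.filter fun i : Fin (nn k) => w ⟨k, i⟩ = 1).card with hmdef
  have hSk : ∀ k, (∑ i, w ⟨k, i⟩) = (m k : ℝ) := by
    intro k
    have h1 : ∀ i ∈ (univ : Finset (Fin (nn k))), w ⟨k, i⟩
        = if w ⟨k, i⟩ = 1 then (1 : ℝ) else 0 := by
      intro i _
      rcases h01 ⟨k, i⟩ with h | h <;> simp [h]
    rw [Finset.sum_congr rfl h1, Finset.sum_boole, hmdef]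
  have hmle : ∀ k, m k ≤ nn k := fun k => by
    rw [hmdef]
    calc (univ.filter fun i : Fin (nn k) => w ⟨k, i⟩ = 1).card
        ≤ (univ : Finset (Fin (nn k))).card := Finset.card_filter_le _ _
      _ = nn k := by rw [Finset.card_univ, Fintype.card_fin]
  have hMpos : 1 ≤ ∑ k, (m k : ℤ) := by
    obtain ⟨x, hx⟩ := hex
    have hx' : x.2 ∈ univ.filter fun i : Fin (nn x.1) => w ⟨x.1, i⟩ = 1 := by
      apply Finset.mem_filter.mpr
      refine ⟨Finset.mem_univ _, ?_⟩
      exact hx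
    have h1 : 1 ≤ m x.1 := by
      rw [hmdef]
      exact Finset.card_pos.mpr ⟨x.2, hx'⟩
    calc (1 : ℤ) ≤ (m x.1 : ℤ) := by exact_mod_cast h1
      _ ≤ ∑ k, (m k : ℤ) :=
        Finset.single_le_sum (f := fun k => (m k : ℤ))
          (fun k _ => by positivity) (Finset.mem_univ x.1)
  have hZ := AR2 (fun k => (nn k : ℤ)) (fun k => (m k : ℤ)) (n : ℤ)
    (fun k => show (1 : ℤ) ≤ (nn k : ℤ) by exact_mod_cast hpos k)
    (fun k => show (0 : ℤ) ≤ (m k : ℤ) by positivity)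
    (fun k => show (m k : ℤ) ≤ (nn k : ℤ) by exact_mod_cast hmle k)
    (show (∑ k, (nn k : ℤ)) ≤ (n : ℤ) by exact_mod_cast hn)
    (fun k => show 2 * (nn k : ℤ) + 1 ≤ (n : ℤ) by exact_mod_cast h2 k)
    hMpos
    (by
      intro ⟨hN3, hr3, hall⟩
      refine hexcp ⟨?_, hr3, fun k => ?_⟩
      · exact_mod_cast hN3
      · exact_mod_cast (show ((nn k : ℤ)) = 1 from hall k))
  rw [eval_L w h01, eval_R hn w h01]
  have hrw : (∑ k, (∑ i, w ⟨k, i⟩) * (2 * (nn k : ℝ) + 1 - ∑ i, w ⟨k, i⟩))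
      = ∑ k, (m k : ℝ) * (2 * (nn k : ℝ) + 1 - (m k : ℝ)) :=
    Finset.sum_congr rfl (fun k _ => by rw [hSk k])
  have hrw2 : (∑ k, ∑ i, w ⟨k, i⟩) = ∑ k, (m k : ℝ) :=
    Finset.sum_congr rfl (fun k _ => hSk k)
  rw [hrw, hrw2]
  have hZ' : 2 * ∑ k, (m k : ℤ) * (2 * (nn k : ℤ) + 1 - (m k : ℤ)) + 1
      ≤ (∑ k, (m k : ℤ)) * (2 * (n : ℤ) + 1 - ∑ k, (m k : ℤ)) := hZ
  exact_mod_cast hZ'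

end Machinery

section Induction

variable {r n : ℕ} {nn : Fin r → ℕ}

lemma split_step (u : (Σ k : Fin r, Fin (nn k)) → ℝ) (hu : ∀ x, 0 ≤ u x)
    (hT : (univ.filter fun x => 0 < u x).Nonempty) :
    ∃ (β : ℝ) (w u' : (Σ k : Fin r, Fin (nn k)) → ℝ),
      0 < β ∧ (∀ x, w x = 0 ∨ w x = 1) ∧ (∃ x, w x = 1) ∧ (∀ x, 0 ≤ u' x) ∧
      (univ.filter fun x => 0 < u' x) ⊂ (univ.filter fun x => 0 < u x) ∧
      Lval nn u = β * Lval nn w + Lval nn u' ∧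
      Rval nn n u = β * Rval nn n w + Rval nn n u' := by
  classical
  set T := univ.filter fun x => 0 < u x with hTdef
  set β := T.inf' hT u with hβdef
  have hβpos : 0 < β := by
    rw [hβdef, Finset.lt_inf'_iff]
    intro b hb
    exact (Finset.mem_filter.mp hb).2
  have hβle : ∀ x, 0 < u x → β ≤ u x := fun x hx =>
    Finset.inf'_le _ (Finset.mem_filter.mpr ⟨Finset.mem_univ x, hx⟩)
  set w : (Σ k : Fin r, Fin (nn k)) → ℝ := fun x => if 0 < u x then (1 : ℝ) else 0 with hwdef
  set u' : (Σ k : Fin r, Fin (nn k)) → ℝ := fun x => u x - β * w x with hu'def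
  have hw01 : ∀ x, w x = 0 ∨ w x = 1 := fun x => by
    by_cases h : 0 < u x <;> simp [hwdef, h]
  have hw0 : ∀ x, 0 ≤ w x := fun x => by
    rcases hw01 x with h | h <;> rw [h] <;> norm_num
  have hu'0 : ∀ x, 0 ≤ u' x := fun x => by
    by_cases h : 0 < u x
    · have := hβle x h
      simp only [hu'def, hwdef, if_pos h, mul_one]
      linarith
    · have hux : u x = 0 := le_antisymm (not_lt.mp h) (hu x)
      simp [hu'def, hwdef, h, hux]
  have hdecomp : ∀ x, u x = β * w x + u' x := fun x => by
    simp only [hu'def]; ring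
  have hmono : ∀ x y, u x ≤ u y → (w x ≤ w y ∧ u' x ≤ u' y) := by
    intro x y hxy
    by_cases hx : 0 < u x
    · have hy : 0 < u y := lt_of_lt_of_le hx hxy
      constructor
      · simp [hwdef, hx, hy]
      · simp only [hu'def, hwdef, if_pos hx, if_pos hy]
        linarith
    · have hux : u x = 0 := le_antisymm (not_lt.mp hx) (hu x)
      constructor
      · by_cases hy : 0 < u y <;> simp [hwdef, hx, hy]
      · have h0 : u' x = 0 := by simp [hu'def, hwdef, hx, hux]
        rw [h0]; exact hu'0 y
  have hcompat : ∀ x y, 0 ≤ (β * w x - β * w y) * (u' x - u' y) := by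
    intro x y
    rcases le_total (u x) (u y) with hxy | hxy
    · obtain ⟨h1, h2⟩ := hmono x y hxy
      have ha : 0 ≤ β * w y - β * w x := by nlinarith
      have hb : 0 ≤ u' y - u' x := by linarith
      nlinarith [mul_nonneg ha hb]
    · obtain ⟨h1, h2⟩ := hmono y x hxy
      have ha : 0 ≤ β * w x - β * w y := by nlinarith
      have hb : 0 ≤ u' x - u' y := by linarith
      nlinarith [mul_nonneg ha hb]
  -- strict subset
  have hsub : (univ.filter fun x => 0 < u' x) ⊆ T := by
    intro x hx
    have hx' : 0 < u' x := (Finset.mem_filter.mp hx).2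
    apply Finset.mem_filter.mpr
    refine ⟨Finset.mem_univ x, ?_⟩
    by_contra hcon
    have hux : u x = 0 := le_antisymm (not_lt.mp hcon) (hu x)
    have : u' x = 0 := by simp [hu'def, hwdef, hcon, hux]
    rw [this] at hx'; exact lt_irrefl 0 hx'
  obtain ⟨x0, hx0T, hx0eq⟩ := Finset.exists_mem_eq_inf' hT u
  have hx0pos : 0 < u x0 := (Finset.mem_filter.mp hx0T).2
  have hu'x0 : u' x0 = 0 := by
    simp only [hu'def, hwdef, if_pos hx0pos, mul_one]
    rw [← hβdef] at hx0eq
    linarith [hx0eq.symm.le, hx0eq.le]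
  have hssub : (univ.filter fun x => 0 < u' x) ⊂ T := by
    refine Finset.ssubset_iff_of_subset hsub |>.mpr ?_
    refine ⟨x0, hx0T, ?_⟩
    intro hcon
    have := (Finset.mem_filter.mp hcon).2
    rw [hu'x0] at this; exact lt_irrefl 0 this
  -- L decomposition
  have hLblocks : ∀ k, rhoC (fun i => u ⟨k, i⟩)
      = β * rhoC (fun i => w ⟨k, i⟩) + rhoC (fun i => u' ⟨k, i⟩) := by
    intro k
    have e0 : (fun i => u ⟨k, i⟩) = fun i => (β * w ⟨k, i⟩) + u' ⟨k, i⟩ :=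
      funext fun i => hdecomp _
    rw [e0, rhoC_add (fun i => β * w ⟨k, i⟩) (fun i => u' ⟨k, i⟩)
        (fun i => mul_nonneg hβpos.le (hw0 _)) (fun i => hu'0 _)
        (fun i j => hcompat _ _),
      rhoC_smul β hβpos.le]
  have hL : Lval nn u = β * Lval nn w + Lval nn u' := by
    unfold Lval
    rw [Finset.sum_congr rfl (fun k (_ : k ∈ univ) => hLblocks k), Finset.sum_add_distrib,
      ← Finset.mul_sum]
    ring
  -- R decomposition
  have e0R : (Sum.elim u (fun _ : Fin (n - ∑ k, nn k) => (0 : ℝ)))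
      = fun z => (β * Sum.elim w (fun _ : Fin (n - ∑ k, nn k) => (0 : ℝ)) z)
        + Sum.elim u' (fun _ : Fin (n - ∑ k, nn k) => (0 : ℝ)) z := by
    funext z
    rcases z with a | b
    · exact hdecomp a
    · simp
  have hcompatR : ∀ z z' : (Σ k : Fin r, Fin (nn k)) ⊕ Fin (n - ∑ k, nn k),
      0 ≤ (β * Sum.elim w (fun _ => (0:ℝ)) z - β * Sum.elim w (fun _ => (0:ℝ)) z')
        * (Sum.elim u' (fun _ => (0:ℝ)) z - Sum.elim u' (fun _ => (0:ℝ)) z') := by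
    intro z z'
    rcases z with a | b <;> rcases z' with a' | b' <;>
      simp only [Sum.elim_inl, Sum.elim_inr]
    · exact hcompat a a'
    · simp only [mul_zero, sub_zero]
      exact mul_nonneg (mul_nonneg hβpos.le (hw0 a)) (hu'0 a)
    · have := mul_nonneg (mul_nonneg hβpos.le (hw0 a')) (hu'0 a')
      nlinarith
    · simp
  have hR : Rval nn n u = β * Rval nn n w + Rval nn n u' := by
    unfold Rval
    rw [e0R, rhoC_add _ _
        (fun z => by
          rcases z with a | b
          · exact mul_nonneg hβpos.le (hw0 a)
          · simp)
        (fun z => by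
          rcases z with a | b
          · exact hu'0 a
          · simp [le_refl])
        hcompatR,
      rhoC_smul β hβpos.le]
  exact ⟨β, w, u', hβpos, hw01, ⟨x0, by simp [hwdef, hx0pos]⟩, hu'0, hssub, hL, hR⟩

lemma main_nonneg
    (key : ∀ w : (Σ k : Fin r, Fin (nn k)) → ℝ,
      (∀ x, w x = 0 ∨ w x = 1) → Lval nn w ≤ Rval nn n w) :
    ∀ u : (Σ k : Fin r, Fin (nn k)) → ℝ, (∀ x, 0 ≤ u x) → Lval nn u ≤ Rval nn n u := by
  classical
  suffices H : ∀ c : ℕ, ∀ u : (Σ k : Fin r, Fin (nn k)) → ℝ, (∀ x, 0 ≤ u x) →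
      (univ.filter fun x => 0 < u x).card = c → Lval nn u ≤ Rval nn n u by
    intro u hu; exact H _ u hu rfl
  intro c
  induction c using Nat.strong_induction_on with
  | _ c IH =>
    intro u hu hcard
    by_cases hT : (univ.filter fun x => 0 < u x).Nonempty
    · obtain ⟨β, w, u', hβpos, hw01, -, hu'0, hssub, hL, hR⟩ := split_step u hu hT
      have hcardlt : (univ.filter fun x => 0 < u' x).card < c :=
        hcard ▸ Finset.card_lt_card hssub
      have h1 := key w hw01
      have h2 := IH _ hcardlt u' hu'0 rfl
      rw [hL, hR]
      nlinarith
    · have hz : ∀ x, u x = 0 := by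
        intro x
        by_contra hx
        exact hT ⟨x, Finset.mem_filter.mpr
          ⟨Finset.mem_univ x, lt_of_le_of_ne (hu x) (Ne.symm hx)⟩⟩
      exact key u fun x => Or.inl (hz x)

lemma main_pos
    (key : ∀ w : (Σ k : Fin r, Fin (nn k)) → ℝ,
      (∀ x, w x = 0 ∨ w x = 1) → Lval nn w ≤ Rval nn n w)
    (keys : ∀ w : (Σ k : Fin r, Fin (nn k)) → ℝ,
      (∀ x, w x = 0 ∨ w x = 1) → (∃ x, w x = 1) → Lval nn w + 1 ≤ Rval nn n w) :
    ∀ u : (Σ k : Fin r, Fin (nn k)) → ℝ, (∀ x, 0 ≤ u x) → (∃ x, 0 < u x) →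
      Lval nn u < Rval nn n u := by
  intro u hu ⟨x, hx⟩
  have hT : (univ.filter fun x => 0 < u x).Nonempty :=
    ⟨x, Finset.mem_filter.mpr ⟨Finset.mem_univ x, hx⟩⟩
  obtain ⟨β, w, u', hβpos, hw01, hex, hu'0, hssub, hL, hR⟩ := split_step u hu hT
  have h1 := keys w hw01 hex
  have h2 := main_nonneg key u' hu'0
  rw [hL, hR]
  nlinarith

end Induction

section Witness

variable {r n : ℕ} {nn : Fin r → ℕ}

noncomputable def sing (x0 : Σ k : Fin r, Fin (nn k)) : (Σ k : Fin r, Fin (nn k)) → ℝ :=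
  fun x => if x = x0 then 1 else 0

lemma sing01 (x0 : Σ k : Fin r, Fin (nn k)) :
    ∀ x, sing x0 x = 0 ∨ sing x0 x = 1 := fun x => by
  unfold sing; by_cases h : x = x0 <;> simp [h]

lemma sing_block_sum (x0 : Σ k : Fin r, Fin (nn k)) (k : Fin r) :
    (∑ i, sing x0 ⟨k, i⟩) = if k = x0.1 then 1 else 0 := by
  obtain ⟨k0, i0⟩ := x0
  simp only [sing]
  by_cases hk : k = k0
  · subst hk
    rw [if_pos rfl]
    have hcond : ∀ i : Fin (nn k), ((⟨k, i⟩ : Σ k : Fin r, Fin (nn k)) = ⟨k, i0⟩) ↔ i = i0 := by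
      intro i
      constructor
      · intro h
        exact eq_of_heq (Sigma.mk.inj_iff.mp h).2
      · intro h; rw [h]
    have : ∀ i ∈ (univ : Finset (Fin (nn k))),
        (if (⟨k, i⟩ : Σ k : Fin r, Fin (nn k)) = ⟨k, i0⟩ then (1:ℝ) else 0)
          = if i = i0 then (1:ℝ) else 0 := by
      intro i _
      by_cases h : i = i0
      · rw [if_pos ((hcond i).mpr h), if_pos h]
      · rw [if_neg (fun hc => h ((hcond i).mp hc)), if_neg h]
    rw [Finset.sum_congr rfl this, Finset.sum_ite_eq' univ i0 (fun _ => (1:ℝ))]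
    simp
  · rw [if_neg hk]
    apply Finset.sum_eq_zero
    intro i _
    rw [if_neg]
    intro hc
    exact hk (congrArg Sigma.fst hc)

lemma sing_L (x0 : Σ k : Fin r, Fin (nn k)) :
    Lval nn (sing x0) = 4 * (nn x0.1 : ℝ) := by
  rw [eval_L (sing x0) (sing01 x0)]
  have h1 : ∀ k ∈ (univ : Finset (Fin r)),
      (∑ i, sing x0 ⟨k, i⟩) * (2 * (nn k : ℝ) + 1 - ∑ i, sing x0 ⟨k, i⟩)
        = if k = x0.1 then 2 * (nn x0.1 : ℝ) else 0 := by
    intro k _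
    rw [sing_block_sum]
    by_cases h : k = x0.1
    · rw [if_pos h, if_pos h, h]; ring
    · rw [if_neg h, if_neg h]; ring
  rw [Finset.sum_congr rfl h1, Finset.sum_ite_eq' univ x0.1 (fun _ => 2 * (nn x0.1 : ℝ))]
  simp only [Finset.mem_univ, if_pos]
  ring

lemma sing_R (hn : (∑ k, nn k) ≤ n) (x0 : Σ k : Fin r, Fin (nn k)) :
    Rval nn n (sing x0) = 2 * (n : ℝ) := by
  rw [eval_R hn (sing x0) (sing01 x0)]
  have h1 : (∑ k, ∑ i, sing x0 ⟨k, i⟩) = 1 := by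
    have h2 : ∀ k ∈ (univ : Finset (Fin r)),
        (∑ i, sing x0 ⟨k, i⟩) = if k = x0.1 then (1:ℝ) else 0 :=
      fun k _ => sing_block_sum x0 k
    rw [Finset.sum_congr rfl h2, Finset.sum_ite_eq' univ x0.1 (fun _ => (1:ℝ))]
    simp
  rw [h1]; ring

end Witness

section Witness2

variable {r n : ℕ} {nn : Fin r → ℕ}

noncomputable def pairw (x0 x1 : Σ k : Fin r, Fin (nn k)) : (Σ k : Fin r, Fin (nn k)) → ℝ :=
  fun x => sing x0 x + sing x1 x

lemma pair01 (x0 x1 : Σ k : Fin r, Fin (nn k)) (hne : x0 ≠ x1) :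
    ∀ x, pairw x0 x1 x = 0 ∨ pairw x0 x1 x = 1 := by
  intro x
  unfold pairw sing
  by_cases h0 : x = x0
  · subst h0
    rw [if_pos rfl, if_neg hne]
    right; ring
  · by_cases h1 : x = x1
    · subst h1
      rw [if_neg h0, if_pos rfl]
      right; ring
    · rw [if_neg h0, if_neg h1]
      left; ring

lemma pair_block_sum (x0 x1 : Σ k : Fin r, Fin (nn k)) (k : Fin r) :
    (∑ i, pairw x0 x1 ⟨k, i⟩)
      = (if k = x0.1 then (1:ℝ) else 0) + (if k = x1.1 then (1:ℝ) else 0) := by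
  unfold pairw
  rw [Finset.sum_add_distrib, sing_block_sum, sing_block_sum]

lemma pair_L (x0 x1 : Σ k : Fin r, Fin (nn k)) (hne1 : x0.1 ≠ x1.1) :
    Lval nn (pairw x0 x1) = 4 * (nn x0.1 : ℝ) + 4 * (nn x1.1 : ℝ) := by
  have hne : x0 ≠ x1 := fun h => hne1 (congrArg Sigma.fst h)
  rw [eval_L (pairw x0 x1) (pair01 x0 x1 hne)]
  have h1 : ∀ k ∈ (univ : Finset (Fin r)),
      (∑ i, pairw x0 x1 ⟨k, i⟩) * (2 * (nn k : ℝ) + 1 - ∑ i, pairw x0 x1 ⟨k, i⟩)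
        = (if k = x0.1 then 2 * (nn x0.1 : ℝ) else 0)
          + (if k = x1.1 then 2 * (nn x1.1 : ℝ) else 0) := by
    intro k _
    rw [pair_block_sum]
    by_cases h0 : k = x0.1
    · have h1' : k ≠ x1.1 := by rw [h0]; exact hne1
      rw [if_pos h0, if_neg h1', if_pos h0, if_neg h1', h0]; ring
    · by_cases h1' : k = x1.1
      · rw [if_neg h0, if_pos h1', if_neg h0, if_pos h1', h1']; ring
      · rw [if_neg h0, if_neg h1', if_neg h0, if_neg h1']; ring
  rw [Finset.sum_congr rfl h1, Finset.sum_add_distrib,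
    Finset.sum_ite_eq' univ x0.1 (fun _ => 2 * (nn x0.1 : ℝ)),
    Finset.sum_ite_eq' univ x1.1 (fun _ => 2 * (nn x1.1 : ℝ))]
  simp only [Finset.mem_univ, if_pos]
  ring

lemma pair_R (hn : (∑ k, nn k) ≤ n) (x0 x1 : Σ k : Fin r, Fin (nn k)) (hne1 : x0.1 ≠ x1.1) :
    Rval nn n (pairw x0 x1) = 2 * (2 * (n : ℝ) - 1) := by
  have hne : x0 ≠ x1 := fun h => hne1 (congrArg Sigma.fst h)
  rw [eval_R hn (pairw x0 x1) (pair01 x0 x1 hne)]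
  have h1 : (∑ k, ∑ i, pairw x0 x1 ⟨k, i⟩) = 2 := by
    have h2 : ∀ k ∈ (univ : Finset (Fin r)), (∑ i, pairw x0 x1 ⟨k, i⟩)
        = (if k = x0.1 then (1:ℝ) else 0) + (if k = x1.1 then (1:ℝ) else 0) :=
      fun k _ => pair_block_sum x0 x1 k
    rw [Finset.sum_congr rfl h2, Finset.sum_add_distrib,
      Finset.sum_ite_eq' univ x0.1 (fun _ => (1:ℝ)),
      Finset.sum_ite_eq' univ x1.1 (fun _ => (1:ℝ))]
    norm_num
  rw [h1]; ring

lemma ones_L (hall : ∀ k, nn k = 1) : Lval nn (fun _ => (1:ℝ)) = 4 * (r : ℝ) := by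
  rw [eval_L (fun _ => (1:ℝ)) (fun _ => Or.inr rfl)]
  have h1 : ∀ k ∈ (univ : Finset (Fin r)),
      (∑ _i : Fin (nn k), (1:ℝ)) * (2 * (nn k : ℝ) + 1 - ∑ _i : Fin (nn k), (1:ℝ))
        = 2 := by
    intro k _
    have : (∑ _i : Fin (nn k), (1:ℝ)) = 1 := by
      rw [Finset.sum_const, Finset.card_univ, Fintype.card_fin, hall k]
      simp
    rw [this, hall k]
    norm_num
  rw [Finset.sum_congr rfl h1, Finset.sum_const, Finset.card_univ, Fintype.card_fin,
    nsmul_eq_mul]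
  ring

lemma ones_R (hn : (∑ k, nn k) ≤ n) (hall : ∀ k, nn k = 1) :
    Rval nn n (fun _ => (1:ℝ)) = (r : ℝ) * (2 * (n : ℝ) + 1 - r) := by
  rw [eval_R hn (fun _ => (1:ℝ)) (fun _ => Or.inr rfl)]
  have h1 : (∑ k : Fin r, ∑ _i : Fin (nn k), (1:ℝ)) = (r : ℝ) := by
    have h2 : ∀ k ∈ (univ : Finset (Fin r)), (∑ _i : Fin (nn k), (1:ℝ)) = 1 := by
      intro k _
      rw [Finset.sum_const, Finset.card_univ, Fintype.card_fin, hall k]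
      simp
    rw [Finset.sum_congr rfl h2, Finset.sum_const, Finset.card_univ, Fintype.card_fin,
      nsmul_eq_mul]
    ring
  rw [h1]

end Witness2

/-- Benoist–Kobayashi inequalities for
`𝔥 = 𝔰𝔭_{n_1} ⊕ ⋯ ⊕ 𝔰𝔭_{n_r} ⊂ 𝔤 = 𝔰𝔭_n` (block diagonal). -/
theorem stmt13 (r n : ℕ) (hr : 1 ≤ r) (nn : Fin r → ℕ)
    (hmono : Antitone nn) (hpos : ∀ k, 1 ≤ nn k) (hn : (∑ k, nn k) ≤ n) :
    ((∀ a : (k : Fin r) → Fin (nn k) → ℝ,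
        2 * (∑ k, rhoC (a k)) ≤
          rhoC (Sum.elim (fun x : Σ k : Fin r, Fin (nn k) => a x.1 x.2)
            (fun _ : Fin (n - ∑ k, nn k) => (0 : ℝ)))) ↔
      (2 * nn ⟨0, hr⟩ ≤ n ∧
        ¬ ∃ h : 2 ≤ r, n = 2 * nn ⟨0, hr⟩ ∧ n = 2 * nn ⟨1, h⟩)) ∧
    ((∀ a : (k : Fin r) → Fin (nn k) → ℝ, a ≠ 0 →
        2 * (∑ k, rhoC (a k)) <
          rhoC (Sum.elim (fun x : Σ k : Fin r, Fin (nn k) => a x.1 x.2)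
            (fun _ : Fin (n - ∑ k, nn k) => (0 : ℝ)))) ↔
      (2 * nn ⟨0, hr⟩ ≤ n - 1 ∧ ¬ (n = 3 ∧ r = 3 ∧ ∀ k, nn k = 1))) := by
  classical
  have hrn : r ≤ ∑ k, nn k := by
    calc r = ∑ _k : Fin r, 1 := by simp
      _ ≤ ∑ k, nn k := Finset.sum_le_sum fun k _ => hpos k
  have hn1 : 1 ≤ n := le_trans (le_trans hr hrn) hn
  have hmono0 : ∀ k : Fin r, nn k ≤ nn ⟨0, hr⟩ := fun k =>
    hmono (by simp [Fin.le_def])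
  have convL : ∀ a : (k : Fin r) → Fin (nn k) → ℝ,
      Lval nn (fun x : Σ k : Fin r, Fin (nn k) => |a x.1 x.2|) = 2 * ∑ k, rhoC (a k) := by
    intro a
    unfold Lval
    congr 1
    exact Finset.sum_congr rfl (fun k _ => rhoC_abs (a k))
  have convR : ∀ a : (k : Fin r) → Fin (nn k) → ℝ,
      Rval nn n (fun x : Σ k : Fin r, Fin (nn k) => |a x.1 x.2|)
        = rhoC (Sum.elim (fun x : Σ k : Fin r, Fin (nn k) => a x.1 x.2)
            (fun _ : Fin (n - ∑ k, nn k) => (0 : ℝ))) := by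
    intro a
    unfold Rval
    have e : (Sum.elim (fun x : Σ k : Fin r, Fin (nn k) => |a x.1 x.2|)
        (fun _ : Fin (n - ∑ k, nn k) => (0 : ℝ)))
        = fun z => |Sum.elim (fun x : Σ k : Fin r, Fin (nn k) => a x.1 x.2)
            (fun _ : Fin (n - ∑ k, nn k) => (0 : ℝ)) z| := by
      funext z
      rcases z with z | z
      · rfl
      · simp
    rw [e]
    exact rhoC_abs _
  constructor
  · constructor
    · intro H
      constructor
      · by_contra hcon
        push_neg at hcon
        have h := H (fun k i => sing (⟨⟨0, hr⟩, ⟨0, hpos ⟨0, hr⟩⟩⟩ :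
          Σ k : Fin r, Fin (nn k)) ⟨k, i⟩)
        have h' : Lval nn (sing ⟨⟨0, hr⟩, ⟨0, hpos ⟨0, hr⟩⟩⟩)
            ≤ Rval nn n (sing ⟨⟨0, hr⟩, ⟨0, hpos ⟨0, hr⟩⟩⟩) := h
        rw [sing_L, sing_R hn] at h'
        dsimp only at h'
        have h'' : 4 * nn ⟨0, hr⟩ ≤ 2 * n := by exact_mod_cast h'
        omega
      · rintro ⟨h2r, hA, hB⟩
        have hne1 : ((⟨⟨0, hr⟩, ⟨0, hpos ⟨0, hr⟩⟩⟩ : Σ k : Fin r, Fin (nn k))).1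
            ≠ ((⟨⟨1, h2r⟩, ⟨0, hpos ⟨1, h2r⟩⟩⟩ : Σ k : Fin r, Fin (nn k))).1 := by
          intro hc
          have := congrArg Fin.val hc
          simp at this
        have h := H (fun k i => pairw (⟨⟨0, hr⟩, ⟨0, hpos ⟨0, hr⟩⟩⟩ :
          Σ k : Fin r, Fin (nn k)) ⟨⟨1, h2r⟩, ⟨0, hpos ⟨1, h2r⟩⟩⟩ ⟨k, i⟩)
        have h' : Lval nn (pairw ⟨⟨0, hr⟩, ⟨0, hpos ⟨0, hr⟩⟩⟩ ⟨⟨1, h2r⟩, ⟨0, hpos ⟨1, h2r⟩⟩⟩)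
            ≤ Rval nn n (pairw ⟨⟨0, hr⟩, ⟨0, hpos ⟨0, hr⟩⟩⟩ ⟨⟨1, h2r⟩, ⟨0, hpos ⟨1, h2r⟩⟩⟩) := h
        rw [pair_L _ _ hne1, pair_R hn _ _ hne1] at h'
        dsimp only at h'
        have e0 : (n : ℝ) = 2 * (nn ⟨0, hr⟩ : ℝ) := by exact_mod_cast hA
        have e1 : (n : ℝ) = 2 * (nn ⟨1, h2r⟩ : ℝ) := by exact_mod_cast hB
        linarith
    · rintro ⟨hc1, hc2⟩ a
      have h2 : ∀ k, 2 * nn k ≤ n := fun k => by have := hmono0 k; omega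
      have hexcl : ∀ k l : Fin r, k ≠ l → ¬(2 * nn k = n ∧ 2 * nn l = n) := by
        rintro k l hkl ⟨hk, hl⟩
        have h2r : 2 ≤ r := by
          by_contra hcon
          push_neg at hcon
          have hkv := k.isLt
          have hlv := l.isLt
          exact hkl (Fin.ext (by omega))
        apply hc2
        refine ⟨h2r, by have := hmono0 k; omega, ?_⟩
        have h10 : nn ⟨1, h2r⟩ ≤ nn ⟨0, hr⟩ := hmono0 _
        by_cases hkv : 1 ≤ k.val
        · have hk1 : nn k ≤ nn ⟨1, h2r⟩ := hmono (by simp [Fin.le_def]; omega)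
          have := hmono0 k
          omega
        · have hlv : 1 ≤ l.val := by
            by_contra hcon
            push_neg at hcon
            exact hkl (Fin.ext (by omega))
          have hl1 : nn l ≤ nn ⟨1, h2r⟩ := hmono (by simp [Fin.le_def]; omega)
          have := hmono0 l
          omega
      have hu : ∀ x : Σ k : Fin r, Fin (nn k), 0 ≤ |a x.1 x.2| := fun x => abs_nonneg _
      have h := main_nonneg (key01 hpos hn h2 hexcl) (fun x => |a x.1 x.2|) hu
      calc 2 * ∑ k, rhoC (a k)
          = Lval nn (fun x : Σ k : Fin r, Fin (nn k) => |a x.1 x.2|) := (convL a).symm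
        _ ≤ Rval nn n (fun x : Σ k : Fin r, Fin (nn k) => |a x.1 x.2|) := h
        _ = _ := convR a
  · constructor
    · intro H
      constructor
      · by_contra hcon
        push_neg at hcon
        have hane : (fun k i => sing (⟨⟨0, hr⟩, ⟨0, hpos ⟨0, hr⟩⟩⟩ :
            Σ k : Fin r, Fin (nn k)) ⟨k, i⟩) ≠ (0 : (k : Fin r) → Fin (nn k) → ℝ) := by
          intro hc
          have h1 := congrFun (congrFun hc ⟨0, hr⟩) ⟨0, hpos ⟨0, hr⟩⟩
          simp [sing] at h1
        have h := H _ hane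
        have h' : Lval nn (sing ⟨⟨0, hr⟩, ⟨0, hpos ⟨0, hr⟩⟩⟩)
            < Rval nn n (sing ⟨⟨0, hr⟩, ⟨0, hpos ⟨0, hr⟩⟩⟩) := h
        rw [sing_L, sing_R hn] at h'
        dsimp only at h'
        have h'' : 4 * nn ⟨0, hr⟩ < 2 * n := by exact_mod_cast h'
        omega
      · rintro ⟨hn3, hr3, hall⟩
        have hane : (fun (k : Fin r) (_ : Fin (nn k)) => (1:ℝ))
            ≠ (0 : (k : Fin r) → Fin (nn k) → ℝ) := by
          intro hc
          have h1 := congrFun (congrFun hc ⟨0, hr⟩) ⟨0, hpos ⟨0, hr⟩⟩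
          norm_num at h1
        have h := H _ hane
        have h' : Lval nn (fun _ => (1:ℝ)) < Rval nn n (fun _ => (1:ℝ)) := h
        rw [ones_L hall, ones_R hn hall] at h'
        rw [hr3, hn3] at h'
        norm_num at h'
    · rintro ⟨hc1, hc2⟩ a ha
      have h2 : ∀ k, 2 * nn k + 1 ≤ n := fun k => by have := hmono0 k; omega
      have h2' : ∀ k, 2 * nn k ≤ n := fun k => by have := h2 k; omega
      have hexcl : ∀ k l : Fin r, k ≠ l → ¬(2 * nn k = n ∧ 2 * nn l = n) := by
        rintro k l hkl ⟨hk, hl⟩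
        have := h2 k
        omega
      have hu : ∀ x : Σ k : Fin r, Fin (nn k), 0 ≤ |a x.1 x.2| := fun x => abs_nonneg _
      have hex : ∃ x : Σ k : Fin r, Fin (nn k), 0 < |a x.1 x.2| := by
        obtain ⟨k, hk⟩ := Function.ne_iff.mp ha
        obtain ⟨i, hi⟩ := Function.ne_iff.mp hk
        exact ⟨⟨k, i⟩, abs_pos.mpr hi⟩
      have h := main_pos (key01 hpos hn h2' hexcl) (key01s hpos hn h2 hc2)
        (fun x => |a x.1 x.2|) hu hex
      calc 2 * ∑ k, rhoC (a k)
          = Lval nn (fun x : Σ k : Fin r, Fin (nn k) => |a x.1 x.2|) := (convL a).symm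
        _ < Rval nn n (fun x : Σ k : Fin r, Fin (nn k) => |a x.1 x.2|) := h
        _ = _ := convR a
end

section
/- Let p, q ≥ 1 (this encodes 𝔥 = 𝔰𝔩_p(ℂ) ⊕ 𝔰𝔭_q(ℂ) ⊂ 𝔤 = 𝔰𝔭_{p+q}(ℂ)). For a ∈ ℝ^p with Σ_i a_i = 0 and b ∈ ℝ^q, set ρ_h(a,b) := ρ_A(a) + ρ_C(b) and ρ_g(a,b) := ρ_C(a ⌢ b), where a ⌢ b ∈ ℝ^{p+q} is the concatenation. Then: (I) [for all such a, b: 2ρ_h(a,b) ≤ ρ_g(a,b)] if and only if q ≤ p; (II) [for all such (a,b) ≠ (0,0): 2ρ_h(a,b) < ρ_g(a,b)] if and only if q ≤ p − 1. -/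
open Finset

lemma hmin_shift (t u v : ℝ) : min u v = min (u - t) (v - t) + t := by
  rcases le_total u v with h | h
  · rw [min_eq_left h, min_eq_left (by linarith)]; ring
  · rw [min_eq_right h, min_eq_right (by linarith)]; ring

lemma psd_min {ι : Type*} [DecidableEq ι] :
    ∀ (n : ℕ) (s : Finset ι), s.card = n → ∀ (c x : ι → ℝ),
      (∀ i ∈ s, 0 ≤ x i) →
      0 ≤ ∑ i ∈ s, ∑ j ∈ s, c i * c j * min (x i) (x j) := by
  intro n
  induction n with
  | zero =>
      intro s hs c x _
      rw [Finset.card_eq_zero] at hs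
      simp [hs]
  | succ n ih =>
      intro s hs c x hx
      have hne : s.Nonempty := Finset.card_pos.mp (by omega)
      obtain ⟨i₀, hi₀s, hi₀min⟩ := Finset.exists_min_image s x hne
      set t := x i₀ with ht
      have ht0 : 0 ≤ t := hx i₀ hi₀s
      have hx' : ∀ i ∈ s, 0 ≤ x i - t := fun i hi => by have := hi₀min i hi; linarith
      have hrw : (∑ i ∈ s, ∑ j ∈ s, c i * c j * min (x i) (x j))
          = (∑ i ∈ s, ∑ j ∈ s, c i * c j * min (x i - t) (x j - t))
            + t * ((∑ i ∈ s, c i) * (∑ j ∈ s, c j)) := by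
        rw [Finset.sum_mul_sum, Finset.mul_sum, ← Finset.sum_add_distrib]
        refine Finset.sum_congr rfl fun i _ => ?_
        rw [Finset.mul_sum, ← Finset.sum_add_distrib]
        refine Finset.sum_congr rfl fun j _ => ?_
        rw [hmin_shift t (x i) (x j)]; ring
      have hrow : ∀ j ∈ s, c i₀ * c j * min (x i₀ - t) (x j - t) = 0 := by
        intro j hj
        have h1 : x i₀ - t = 0 := by rw [← ht]; ring
        rw [h1, min_eq_left (hx' j hj), mul_zero]
      have hcol : ∀ i ∈ s, c i * c i₀ * min (x i - t) (x i₀ - t) = 0 := by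
        intro i hi
        have h1 : x i₀ - t = 0 := by rw [← ht]; ring
        rw [h1, min_eq_right (hx' i hi), mul_zero]
      have hred : (∑ i ∈ s, ∑ j ∈ s, c i * c j * min (x i - t) (x j - t))
          = ∑ i ∈ s.erase i₀, ∑ j ∈ s.erase i₀, c i * c j * min (x i - t) (x j - t) := by
        rw [← Finset.add_sum_erase s _ hi₀s]
        rw [Finset.sum_eq_zero (fun j hj => hrow j hj), zero_add]
        refine Finset.sum_congr rfl fun i hi => ?_
        rw [← Finset.add_sum_erase s _ hi₀s, hcol i (Finset.mem_of_mem_erase hi), zero_add]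
      have hcard : (s.erase i₀).card = n := by
        rw [Finset.card_erase_of_mem hi₀s, hs]; omega
      have hIH := ih (s.erase i₀) hcard c (fun i => x i - t)
        (fun i hi => hx' i (Finset.mem_of_mem_erase hi))
      rw [hrw, hred]
      have : 0 ≤ t * ((∑ i ∈ s, c i) * (∑ j ∈ s, c j)) := by
        have := sq_nonneg (∑ i ∈ s, c i); nlinarith
      exact add_nonneg hIH this
lemma pt_id (x y : ℝ) :
    |x + y| + 2 * min (max x 0) (max (-y) 0) + 2 * min (max (-x) 0) (max y 0)
    = |x - y| + 2 * min (max x 0) (max y 0) + 2 * min (max (-x) 0) (max (-y) 0) := by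
  rcases le_total 0 x with hx | hx <;> rcases le_total 0 y with hy | hy
  · rw [max_eq_left hx, max_eq_left hy, max_eq_right (neg_nonpos.mpr hx),
      max_eq_right (neg_nonpos.mpr hy), min_eq_right hx, min_eq_left hy,
      min_eq_left le_rfl, abs_of_nonneg (by linarith : (0:ℝ) ≤ x + y)]
    rcases le_total x y with h | h
    · rw [abs_of_nonpos (by linarith : x - y ≤ 0), min_eq_left h]; ring
    · rw [abs_of_nonneg (by linarith : (0:ℝ) ≤ x - y), min_eq_right h]; ring
  · rw [max_eq_left hx, max_eq_right hy, max_eq_right (neg_nonpos.mpr hx),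
      max_eq_left (neg_nonneg.mpr hy), min_eq_left le_rfl, min_eq_right hx,
      min_eq_left (neg_nonneg.mpr hy), abs_of_nonneg (by linarith : (0:ℝ) ≤ x - y)]
    rcases le_total x (-y) with h | h
    · rw [abs_of_nonpos (by linarith : x + y ≤ 0), min_eq_left h]; ring
    · rw [abs_of_nonneg (by linarith : (0:ℝ) ≤ x + y), min_eq_right h]; ring
  · rw [max_eq_right hx, max_eq_left hy, max_eq_left (neg_nonneg.mpr hx),
      max_eq_right (neg_nonpos.mpr hy), min_eq_left le_rfl, min_eq_left hy,
      min_eq_right (neg_nonneg.mpr hx), abs_of_nonpos (by linarith : x - y ≤ 0)]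
    rcases le_total (-x) y with h | h
    · rw [abs_of_nonneg (by linarith : (0:ℝ) ≤ x + y), min_eq_left h]; ring
    · rw [abs_of_nonpos (by linarith : x + y ≤ 0), min_eq_right h]; ring
  · rw [max_eq_right hx, max_eq_right hy, max_eq_left (neg_nonneg.mpr hx),
      max_eq_left (neg_nonneg.mpr hy), min_eq_left (neg_nonneg.mpr hy),
      min_eq_right (neg_nonneg.mpr hx), min_eq_left le_rfl,
      abs_of_nonpos (by linarith : x + y ≤ 0)]
    rcases le_total (-x) (-y) with h | h
    · rw [abs_of_nonneg (by linarith : (0:ℝ) ≤ x - y), min_eq_left h]; ring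
    · rw [abs_of_nonpos (by linarith : x - y ≤ 0), min_eq_right h]; ring
lemma core_sum {ι : Type*} [Fintype ι] [DecidableEq ι] (a : ι → ℝ) :
    ∑ i, ∑ j, |a i - a j| ≤ ∑ i, ∑ j, |a i + a j| := by
  classical
  set u : ι → ℝ := fun i => max (a i) 0 with hu
  set v : ι → ℝ := fun i => max (-a i) 0 with hv
  have hpsd := psd_min (Finset.univ.card) (Finset.univ : Finset (ι ⊕ ι)) rfl
    (Sum.elim (fun _ => (1:ℝ)) (fun _ => (-1:ℝ))) (Sum.elim u v)
    (fun i _ => by cases i <;> simp [hu, hv, le_max_right])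
  have heq : ∑ i ∈ (Finset.univ : Finset (ι ⊕ ι)), ∑ j ∈ Finset.univ,
      (Sum.elim (fun _ => (1:ℝ)) (fun _ => (-1:ℝ))) i *
      (Sum.elim (fun _ => (1:ℝ)) (fun _ => (-1:ℝ))) j *
      min (Sum.elim u v i) (Sum.elim u v j)
      = ((∑ i, ∑ j, min (u i) (u j)) + (∑ i, ∑ j, min (v i) (v j)))
        - ((∑ i, ∑ j, min (u i) (v j)) + (∑ i, ∑ j, min (v i) (u j))) := by
    rw [Fintype.sum_sum_type]
    simp only [Fintype.sum_sum_type, Sum.elim_inl, Sum.elim_inr, one_mul, mul_one,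
      neg_mul, mul_neg, neg_neg, Finset.sum_neg_distrib, Finset.sum_add_distrib]
    ring
  rw [heq] at hpsd
  have hsum : (∑ i, ∑ j, (|a i + a j| + 2 * min (u i) (v j) + 2 * min (v i) (u j)))
      = ∑ i, ∑ j, (|a i - a j| + 2 * min (u i) (u j) + 2 * min (v i) (v j)) := by
    refine Finset.sum_congr rfl fun i _ => Finset.sum_congr rfl fun j _ => ?_
    exact pt_id (a i) (a j)
  simp only [Finset.sum_add_distrib, ← Finset.mul_sum] at hsum
  linarith
lemma rhoC_elim {p q : ℕ} (a : Fin p → ℝ) (b : Fin q → ℝ) :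
    rhoC (Sum.elim a b) = rhoC a + rhoC b
      + ∑ i, ∑ j, (|a i - b j| + |a i + b j|) := by
  have hsym1 : (∑ j : Fin q, ∑ i : Fin p, |b j - a i|)
      = ∑ i : Fin p, ∑ j : Fin q, |a i - b j| := by
    rw [Finset.sum_comm]
    exact Finset.sum_congr rfl fun i _ => Finset.sum_congr rfl fun j _ => abs_sub_comm _ _
  have hsym2 : (∑ j : Fin q, ∑ i : Fin p, |b j + a i|)
      = ∑ i : Fin p, ∑ j : Fin q, |a i + b j| := by
    rw [Finset.sum_comm]
    exact Finset.sum_congr rfl fun i _ => Finset.sum_congr rfl fun j _ => by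
      rw [add_comm (b j)]
  unfold rhoC rhoB
  rw [Fintype.sum_sum_type, Fintype.sum_sum_type]
  simp only [Fintype.sum_sum_type, Sum.elim_inl, Sum.elim_inr, Finset.sum_add_distrib]
  rw [hsym1, hsym2]
  ring

lemma key_a {p : ℕ} (a : Fin p → ℝ) : 2 * rhoA a + ∑ i, |a i| ≤ rhoC a := by
  have hcore := core_sum a
  unfold rhoC rhoB rhoA
  have hsplit : (∑ i, ∑ j, (|a i - a j| + |a i + a j|))
      = (∑ i, ∑ j, |a i - a j|) + ∑ i, ∑ j, |a i + a j| := by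
    simp only [Finset.sum_add_distrib]
  rw [hsplit]
  linarith

lemma rhoC_le {q : ℕ} (b : Fin q → ℝ) : rhoC b ≤ 2 * q * ∑ j, |b j| := by
  unfold rhoC rhoB
  have hpt : ∀ i j : Fin q, |b i - b j| + |b i + b j|
      ≤ 2 * |b i| + 2 * |b j| - (if i = j then 2 * |b j| else 0) := by
    intro i j
    by_cases hij : i = j
    · subst hij
      rw [sub_self, abs_zero, if_pos rfl]
      have h := abs_add_le (b i) (b i)
      linarith
    · rw [if_neg hij]
      have h1 := abs_add_le (b i) (-(b j))
      rw [abs_neg, ← sub_eq_add_neg] at h1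
      have h2 := abs_add_le (b i) (b j)
      linarith
  have h : (∑ i, ∑ j, (|b i - b j| + |b i + b j|))
      ≤ ∑ i, ∑ j, (2 * |b i| + 2 * |b j| - (if i = j then 2 * |b j| else 0)) :=
    Finset.sum_le_sum fun i _ => Finset.sum_le_sum fun j _ => hpt i j
  have hval : (∑ i, ∑ j : Fin q, (2 * |b i| + 2 * |b j| - (if i = j then 2 * |b j| else 0)))
      = 2 * q * (∑ j, |b j|) + 2 * q * (∑ j, |b j|) - 2 * ∑ j, |b j| := by
    simp only [Finset.sum_sub_distrib, Finset.sum_add_distrib, Finset.sum_const,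
      Finset.card_univ, Fintype.card_fin, nsmul_eq_mul, Finset.sum_ite_eq,
      Finset.mem_univ, if_true, ← Finset.mul_sum, ← Finset.sum_mul]
    ring
  rw [hval] at h
  linarith

lemma cross_ge {p q : ℕ} (a : Fin p → ℝ) (b : Fin q → ℝ) :
    2 * p * (∑ j, |b j|) ≤ ∑ i, ∑ j, (|a i - b j| + |a i + b j|) := by
  have hpt : ∀ (i : Fin p) (j : Fin q), 2 * |b j| ≤ |a i - b j| + |a i + b j| := by
    intro i j
    have h := abs_add_le (b j - a i) (a i + b j)
    have h2 : b j - a i + (a i + b j) = 2 * b j := by ring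
    rw [h2, abs_sub_comm] at h
    have h3 : |2 * b j| = 2 * |b j| := by rw [abs_mul]; simp
    linarith
  have h : (∑ i : Fin p, ∑ j, 2 * |b j|) ≤ ∑ i, ∑ j, (|a i - b j| + |a i + b j|) :=
    Finset.sum_le_sum fun i _ => Finset.sum_le_sum fun j _ => hpt i j
  calc 2 * p * (∑ j, |b j|) = ∑ i : Fin p, ∑ j, 2 * |b j| := by
        simp only [← Finset.mul_sum, Finset.sum_const, Finset.card_univ, Fintype.card_fin,
          nsmul_eq_mul]
        ring
    _ ≤ _ := h
lemma sum_e1 {q : ℕ} (hq : 1 ≤ q) (f : ℝ → ℝ) :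
    (∑ j : Fin q, f (if j = (⟨0, hq⟩ : Fin q) then (1:ℝ) else 0))
      = ((q : ℝ) - 1) * f 0 + f 1 := by
  have h : ∀ j : Fin q, f (if j = (⟨0, hq⟩ : Fin q) then (1:ℝ) else 0)
      = f 0 + (if j = (⟨0, hq⟩ : Fin q) then f 1 - f 0 else 0) := by
    intro j; by_cases h : j = (⟨0, hq⟩ : Fin q) <;> simp [h]
  rw [Finset.sum_congr rfl fun j _ => h j, Finset.sum_add_distrib,
    Finset.sum_const, Finset.sum_ite_eq', Finset.card_univ, Fintype.card_fin]
  simp only [Finset.mem_univ, if_true, nsmul_eq_mul]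
  ring

lemma sum_abs_e1 {q : ℕ} (hq : 1 ≤ q) :
    (∑ j : Fin q, |if j = (⟨0, hq⟩ : Fin q) then (1:ℝ) else 0|) = 1 := by
  rw [sum_e1 hq (fun y => |y|)]
  simp

lemma rhoC_e1 {q : ℕ} (hq : 1 ≤ q) :
    rhoC (fun j : Fin q => if j = (⟨0, hq⟩ : Fin q) then (1:ℝ) else 0) = 2 * q := by
  set e1 : Fin q → ℝ := fun j => if j = (⟨0, hq⟩ : Fin q) then (1:ℝ) else 0 with he
  have hinner : ∀ x : ℝ, (∑ j : Fin q, (|x - e1 j| + |x + e1 j|))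
      = ((q : ℝ) - 1) * (|x - 0| + |x + 0|) + (|x - 1| + |x + 1|) :=
    fun x => sum_e1 hq (fun y => |x - y| + |x + y|)
  have hdouble : (∑ i, ∑ j, (|e1 i - e1 j| + |e1 i + e1 j|)) = 4 * q - 2 := by
    rw [Finset.sum_congr rfl fun i _ => hinner (e1 i)]
    rw [sum_e1 hq (fun x => ((q : ℝ) - 1) * (|x - 0| + |x + 0|) + (|x - 1| + |x + 1|))]
    norm_num
    ring_nf
  unfold rhoC rhoB
  rw [hdouble, sum_abs_e1 hq]
  ring


/-- Benoist–Kobayashi inequalities for `𝔥 = 𝔰𝔩_p ⊕ 𝔰𝔭_q ⊂ 𝔤 = 𝔰𝔭_{p+q}`. -/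
theorem stmt16 (p q : ℕ) (hp : 1 ≤ p) (hq : 1 ≤ q) :
    ((∀ (a : Fin p → ℝ) (b : Fin q → ℝ), (∑ i, a i) = 0 →
        2 * (rhoA a + rhoC b) ≤ rhoC (Sum.elim a b)) ↔ q ≤ p) ∧
    ((∀ (a : Fin p → ℝ) (b : Fin q → ℝ), (∑ i, a i) = 0 → ¬(a = 0 ∧ b = 0) →
        2 * (rhoA a + rhoC b) < rhoC (Sum.elim a b)) ↔ q ≤ p - 1) := by
  classical
  set E : Fin q → ℝ := fun j => if j = (⟨0, hq⟩ : Fin q) then (1:ℝ) else 0 with hE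
  have hEC : rhoC E = 2 * q := rhoC_e1 hq
  have hEabs : (∑ j, |E j|) = 1 := sum_abs_e1 hq
  have hEne : E ≠ 0 := by
    intro h
    have h2 := congrFun h ⟨0, hq⟩
    rw [hE] at h2
    simp at h2
  have hA0 : rhoA (0 : Fin p → ℝ) = 0 := by simp [rhoA]
  have hC0 : rhoC (0 : Fin p → ℝ) = 0 := by simp [rhoC, rhoB]
  have hsum0 : (∑ i : Fin p, (0 : Fin p → ℝ) i) = 0 := by simp
  have hcross0 : (∑ i : Fin p, ∑ j : Fin q,
      (|(0 : Fin p → ℝ) i - E j| + |(0 : Fin p → ℝ) i + E j|)) = 2 * p := by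
    have hrow : ∀ i : Fin p,
        (∑ j : Fin q, (|(0 : Fin p → ℝ) i - E j| + |(0 : Fin p → ℝ) i + E j|)) = 2 := by
      intro i
      have hpt : ∀ j : Fin q,
          |(0 : Fin p → ℝ) i - E j| + |(0 : Fin p → ℝ) i + E j| = |E j| + |E j| := by
        intro j; simp
      rw [Finset.sum_congr rfl fun j _ => hpt j, Finset.sum_add_distrib, hEabs]
      norm_num
    rw [Finset.sum_congr rfl fun i _ => hrow i, Finset.sum_const, Finset.card_univ,
      Fintype.card_fin, nsmul_eq_mul]
    ring
  have hgE : rhoC (Sum.elim (0 : Fin p → ℝ) E) = 2 * q + 2 * p := by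
    rw [rhoC_elim, hC0, hEC, hcross0]; ring
  have main : ∀ (a : Fin p → ℝ) (b : Fin q → ℝ), (q : ℝ) ≤ p →
      2 * (rhoA a + rhoC b) ≤ rhoC (Sum.elim a b) := by
    intro a b hqp
    rw [rhoC_elim]
    have k1 := key_a a
    have k2 := rhoC_le b
    have k3 := cross_ge a b
    have ha0 : 0 ≤ ∑ i, |a i| := Finset.sum_nonneg fun i _ => abs_nonneg _
    have hb0 : 0 ≤ ∑ j, |b j| := Finset.sum_nonneg fun j _ => abs_nonneg _
    have hmul : 2 * (q : ℝ) * (∑ j, |b j|) ≤ 2 * (p : ℝ) * (∑ j, |b j|) :=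
      mul_le_mul_of_nonneg_right (by linarith) hb0
    linarith
  refine ⟨⟨fun H => ?_, fun hqp a b _ => main a b (by exact_mod_cast hqp)⟩,
    ⟨fun H => ?_, fun hq1 a b _ hne => ?_⟩⟩
  · have h := H 0 E hsum0
    rw [hA0, hEC, hgE] at h
    have h2 : (q : ℝ) ≤ p := by linarith
    exact_mod_cast h2
  · have h := H 0 E hsum0 (fun hc => hEne hc.2)
    rw [hA0, hEC, hgE] at h
    have h2 : (q : ℝ) < p := by linarith
    have h3 : q < p := by exact_mod_cast h2
    omega
  · have hqp : q + 1 ≤ p := by omega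
    rw [rhoC_elim]
    have k1 := key_a a
    have ha0 : 0 ≤ ∑ i, |a i| := Finset.sum_nonneg fun i _ => abs_nonneg _
    by_cases hb : b = 0
    · subst hb
      have hbC : rhoC (0 : Fin q → ℝ) = 0 := by simp [rhoC, rhoB]
      have hane : a ≠ 0 := fun h => hne ⟨h, rfl⟩
      have hapos : 0 < ∑ i, |a i| := by
        obtain ⟨i, hi⟩ := Function.ne_iff.mp hane
        have hip : 0 < |a i| := abs_pos.mpr hi
        have hle := Finset.single_le_sum (f := fun i => |a i|)
          (fun i _ => abs_nonneg _) (Finset.mem_univ i)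
        linarith
      have hcr : 0 ≤ ∑ i, ∑ j : Fin q,
          (|a i - (0 : Fin q → ℝ) j| + |a i + (0 : Fin q → ℝ) j|) :=
        Finset.sum_nonneg fun i _ => Finset.sum_nonneg fun j _ => by positivity
      rw [hbC]
      linarith
    · have hbpos : 0 < ∑ j, |b j| := by
        obtain ⟨j, hj⟩ := Function.ne_iff.mp hb
        have hjp : 0 < |b j| := abs_pos.mpr hj
        have hle := Finset.single_le_sum (f := fun j => |b j|)
          (fun j _ => abs_nonneg _) (Finset.mem_univ j)
        linarith
      have k2 := rhoC_le b
      have k3 := cross_ge a b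
      have hmul : 2 * (q : ℝ) * (∑ j, |b j|) < 2 * (p : ℝ) * (∑ j, |b j|) := by
        apply mul_lt_mul_of_pos_right _ hbpos
        have hlt : (q : ℝ) < p := by exact_mod_cast (by omega : q < p)
        linarith
      linarith
end
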